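/- arXiv:2010.03346 — 7 statements merged into one kernel-verified Lean document; each statement's English description precedes it below -/
import Mathlib

section
/- For all k ≥ 0, the pooled-server post-arrival sojourn time never exceeds that of either split server: F(k) ≤ min(f1(k), f2(k)). -/
/-- Two-server greedy model (all customers admitted): the pooled-server
post-arrival sojourn time never exceeds that of either split server. -/
theorem pooled_sojourn_le_min_split
    (μ1 μ2 : ℝ) (hμ1 : 0 < μ1) (hμ2 : 0 < μ2)
    (Δ : ℕ → ℝ) (hΔ : ∀ k, 0 ≤ Δ k)
    (f1 f2 F g1 g2 G : ℕ → ℝ)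
    (hf10 : f1 0 = 1 / μ1) (hf20 : f2 0 = 1 / μ2) (hF0 : F 0 = 1 / (μ1 + μ2))
    (hg1 : ∀ k, g1 (k + 1) = max (f1 k - Δ k) (1 / μ1))
    (hg2 : ∀ k, g2 (k + 1) = max (f2 k - Δ k) (1 / μ2))
    (hG : ∀ k, G (k + 1) = max (F k - Δ k) (1 / (μ1 + μ2)))
    (hf1 : ∀ k, f1 (k + 1) =
      if g1 (k + 1) ≤ g2 (k + 1) then g1 (k + 1) + 1 / μ1 else g1 (k + 1))
    (hf2 : ∀ k, f2 (k + 1) =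
      if g1 (k + 1) ≤ g2 (k + 1) then g2 (k + 1) else g2 (k + 1) + 1 / μ2)
    (hF : ∀ k, F (k + 1) = G (k + 1) + 1 / (μ1 + μ2)) :
    ∀ k, F k ≤ min (f1 k) (f2 k) := by
  have hs : 0 < μ1 + μ2 := by linarith
  have e1 : μ1 * (1 / μ1) = 1 := mul_one_div_cancel hμ1.ne'
  have e2 : μ2 * (1 / μ2) = 1 := mul_one_div_cancel hμ2.ne'
  have es : (μ1 + μ2) * (1 / (μ1 + μ2)) = 1 := mul_one_div_cancel hs.ne'
  have hs1 : 1 / (μ1 + μ2) ≤ 1 / μ1 := one_div_le_one_div_of_le hμ1 (by linarith)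
  have hs2 : 1 / (μ1 + μ2) ≤ 1 / μ2 := one_div_le_one_div_of_le hμ2 (by linarith)
  suffices h : ∀ k, F k ≤ f1 k ∧ F k ≤ f2 k ∧
      (μ1 + μ2) * F k ≤ μ1 * f1 k + μ2 * f2 k - 1 by
    intro k
    exact le_min (h k).1 (h k).2.1
  intro k
  induction k with
  | zero =>
    rw [hf10, hf20, hF0]
    refine ⟨hs1, hs2, ?_⟩
    rw [es, e1, e2]; linarith
  | succ k ih =>
    obtain ⟨h1, h2, h3⟩ := ih
    have hΔk := hΔ k
    have hFk1 := hF k; rw [hG k] at hFk1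
    have hf1k1 := hf1 k; rw [hg1 k, hg2 k] at hf1k1
    have hf2k1 := hf2 k; rw [hg1 k, hg2 k] at hf2k1
    set A := max (f1 k - Δ k) (1 / μ1) with hAdef
    set B := max (f2 k - Δ k) (1 / μ2) with hBdef
    set C := max (F k - Δ k) (1 / (μ1 + μ2)) with hCdef
    have hA1 : f1 k - Δ k ≤ A := le_max_left _ _
    have hA2 : 1 / μ1 ≤ A := le_max_right _ _
    have hB1 : f2 k - Δ k ≤ B := le_max_left _ _
    have hB2 : 1 / μ2 ≤ B := le_max_right _ _
    have hCA : C ≤ A := max_le_max (by linarith) hs1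
    have hCB : C ≤ B := max_le_max (by linarith) hs2
    have hmA : 1 ≤ μ1 * A := by
      have := mul_le_mul_of_nonneg_left hA2 hμ1.le; linarith [e1]
    have hmB : 1 ≤ μ2 * B := by
      have := mul_le_mul_of_nonneg_left hB2 hμ2.le; linarith [e2]
    have hC2 : (μ1 + μ2) * C + 1 ≤ μ1 * A + μ2 * B := by
      rcases max_cases (F k - Δ k) (1 / (μ1 + μ2)) with ⟨hc1, _⟩ | ⟨hc1, _⟩ <;>
        rw [← hCdef] at hc1
      · rw [hc1]
        have t1 := mul_le_mul_of_nonneg_left hA1 hμ1.le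
        have t2 := mul_le_mul_of_nonneg_left hB1 hμ2.le
        nlinarith [t1, t2]
      · rw [hc1, es]; linarith
    by_cases hc : A ≤ B
    · rw [if_pos hc] at hf1k1 hf2k1
      refine ⟨?_, ?_, ?_⟩
      · rw [hFk1, hf1k1]; linarith
      · rw [hFk1, hf2k1]
        have h4 : (μ1 + μ2) * (C + 1 / (μ1 + μ2)) ≤ (μ1 + μ2) * B := by
          rw [mul_add, es]
          linarith [hC2, mul_le_mul_of_nonneg_left hc hμ1.le]
        exact le_of_mul_le_mul_left h4 hs
      · rw [hFk1, hf1k1, hf2k1, mul_add, es, mul_add, e1]; linarith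
    · rw [if_neg hc] at hf1k1 hf2k1
      push_neg at hc
      refine ⟨?_, ?_, ?_⟩
      · rw [hFk1, hf1k1]
        have h4 : (μ1 + μ2) * (C + 1 / (μ1 + μ2)) ≤ (μ1 + μ2) * A := by
          rw [mul_add, es]
          linarith [hC2, mul_le_mul_of_nonneg_left hc.le hμ2.le]
        exact le_of_mul_le_mul_left h4 hs
      · rw [hFk1, hf2k1]; linarith
      · rw [hFk1, hf1k1, hf2k1, mul_add, es, mul_add, e2]; linarith
end

section
/- For all k ≥ 0, the pooled-server workload never exceeds the total split-server workload after each arrival: (μ1+μ2)·F(k) ≤ μ1·f1(k) + μ2·f2(k) − 1. (Equivalently, with workloads W(k) = (μ1+μ2)·F(k) − 1, W1(k) = μ1·f1(k) − 1, W2(k) = μ2·f2(k) − 1, one has W(k) ≤ W1(k) + W2(k).) -/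
/-- Two-server greedy model (all customers admitted): the pooled-server
workload never exceeds the total split-server workload after each arrival:
`(μ1+μ2)·F k ≤ μ1·f1 k + μ2·f2 k − 1`. -/
theorem pooled_workload_le_split_workload
    (μ1 μ2 : ℝ) (hμ1 : 0 < μ1) (hμ2 : 0 < μ2)
    (Δ : ℕ → ℝ) (hΔ : ∀ k, 0 ≤ Δ k)
    (f1 f2 F g1 g2 G : ℕ → ℝ)
    (hf10 : f1 0 = 1 / μ1) (hf20 : f2 0 = 1 / μ2) (hF0 : F 0 = 1 / (μ1 + μ2))
    (hg1 : ∀ k, g1 (k + 1) = max (f1 k - Δ k) (1 / μ1))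
    (hg2 : ∀ k, g2 (k + 1) = max (f2 k - Δ k) (1 / μ2))
    (hG : ∀ k, G (k + 1) = max (F k - Δ k) (1 / (μ1 + μ2)))
    (hf1 : ∀ k, f1 (k + 1) =
      if g1 (k + 1) ≤ g2 (k + 1) then g1 (k + 1) + 1 / μ1 else g1 (k + 1))
    (hf2 : ∀ k, f2 (k + 1) =
      if g1 (k + 1) ≤ g2 (k + 1) then g2 (k + 1) else g2 (k + 1) + 1 / μ2)
    (hF : ∀ k, F (k + 1) = G (k + 1) + 1 / (μ1 + μ2)) :
    ∀ k, (μ1 + μ2) * F k ≤ μ1 * f1 k + μ2 * f2 k - 1 := by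
  have hμ : (0:ℝ) < μ1 + μ2 := by linarith
  have e1 : μ1 * (1 / μ1) = 1 := by field_simp
  have e2 : μ2 * (1 / μ2) = 1 := by field_simp
  have eP : (μ1 + μ2) * (1 / (μ1 + μ2)) = 1 := by field_simp
  intro k
  induction k with
  | zero => rw [hf10, hf20, hF0, e1, e2, eP]; norm_num
  | succ k ih =>
    have h1 : 1 ≤ μ1 * g1 (k + 1) := by
      rw [hg1 k]
      calc 1 = μ1 * (1 / μ1) := e1.symm
        _ ≤ _ := mul_le_mul_of_nonneg_left (le_max_right _ _) hμ1.le
    have h2 : 1 ≤ μ2 * g2 (k + 1) := by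
      rw [hg2 k]
      calc 1 = μ2 * (1 / μ2) := e2.symm
        _ ≤ _ := mul_le_mul_of_nonneg_left (le_max_right _ _) hμ2.le
    have h1' : f1 k - Δ k ≤ g1 (k + 1) := (hg1 k) ▸ le_max_left _ _
    have h2' : f2 k - Δ k ≤ g2 (k + 1) := (hg2 k) ▸ le_max_left _ _
    have hGle : (μ1 + μ2) * G (k + 1) ≤ μ1 * g1 (k + 1) + μ2 * g2 (k + 1) - 1 := by
      rw [hG k]
      rcases le_total (F k - Δ k) (1 / (μ1 + μ2)) with h | h
      · rw [max_eq_right h, eP]; linarith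
      · rw [max_eq_left h]
        have a1 := mul_le_mul_of_nonneg_left h1' hμ1.le
        have a2 := mul_le_mul_of_nonneg_left h2' hμ2.le
        nlinarith [hΔ k]
    rw [hF k, hf1 k, hf2 k]
    split_ifs with h
    · nlinarith
    · nlinarith
end

section
/- For all k ≥ 1, the pre-arrival sojourn time seen by the k-th arriving customer at the pooled server never exceeds the minimum of the pre-arrival sojourn times at the two split servers: G(k) ≤ min(g1(k), g2(k)). -/
/-! Measure a sojourn time `s` at a server of rate `μ` by the unfinished work `μ * s - 1` it
represents. The pooled server dominates the split pair: its sojourn time is at most each split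
one, and its unfinished work is at most the total split work. Draining preserves this because the
pooled server works at the combined rate whenever it is busy. An arrival preserves it because the
job joins the split server with the smaller sojourn time, so the other one lies above the weighted
average `(μ1 * g1 + μ2 * g2) / (μ1 + μ2) ≥ G + 1 / (μ1 + μ2)`. -/

structure PooledDominates (μ1 μ2 F f1 f2 : ℝ) : Prop where
  le_left : F ≤ f1
  le_right : F ≤ f2
  work_le : (μ1 + μ2) * F + 1 ≤ μ1 * f1 + μ2 * f2

namespace PooledDominates

variable {μ1 μ2 : ℝ}

theorem initial (hμ1 : 0 < μ1) (hμ2 : 0 < μ2) :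
    PooledDominates μ1 μ2 (1 / (μ1 + μ2)) (1 / μ1) (1 / μ2) where
  le_left := one_div_le_one_div_of_le hμ1 (by linarith)
  le_right := one_div_le_one_div_of_le hμ2 (by linarith)
  work_le := by field_simp; norm_num

theorem drain (hμ1 : 0 < μ1) (hμ2 : 0 < μ2) {F f1 f2 : ℝ}
    (h : PooledDominates μ1 μ2 F f1 f2) (d : ℝ) :
    PooledDominates μ1 μ2 (max (F - d) (1 / (μ1 + μ2)))
      (max (f1 - d) (1 / μ1)) (max (f2 - d) (1 / μ2)) where
  le_left := max_le_max (sub_le_sub_right h.le_left d) (initial hμ1 hμ2).le_left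
  le_right := max_le_max (sub_le_sub_right h.le_right d) (initial hμ1 hμ2).le_right
  work_le := by
    rcases le_total (F - d) (1 / (μ1 + μ2)) with hidle | hbusy
    · calc (μ1 + μ2) * max (F - d) (1 / (μ1 + μ2)) + 1
            = (μ1 + μ2) * (1 / (μ1 + μ2)) + 1 := by rw [max_eq_right hidle]
          _ ≤ μ1 * (1 / μ1) + μ2 * (1 / μ2) := (initial hμ1 hμ2).work_le
          _ ≤ _ := by gcongr <;> exact le_max_right _ _
    · calc (μ1 + μ2) * max (F - d) (1 / (μ1 + μ2)) + 1
            = (μ1 + μ2) * (F - d) + 1 := by rw [max_eq_left hbusy]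
          _ ≤ μ1 * (f1 - d) + μ2 * (f2 - d) := by linarith [h.work_le]
          _ ≤ _ := by gcongr <;> exact le_max_left _ _

theorem arrive (hμ1 : 0 < μ1) (hμ2 : 0 < μ2) {G g1 g2 : ℝ}
    (h : PooledDominates μ1 μ2 G g1 g2) :
    PooledDominates μ1 μ2 (G + 1 / (μ1 + μ2))
      (if g1 ≤ g2 then g1 + 1 / μ1 else g1) (if g1 ≤ g2 then g2 else g2 + 1 / μ2) := by
  have hsum : 0 < μ1 + μ2 := add_pos hμ1 hμ2
  have pooled_work : (μ1 + μ2) * (G + 1 / (μ1 + μ2)) = (μ1 + μ2) * G + 1 := by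
    rw [mul_add, mul_one_div_cancel hsum.ne']
  have above_average {c : ℝ} (hc : μ1 * g1 + μ2 * g2 ≤ (μ1 + μ2) * c) :
      G + 1 / (μ1 + μ2) ≤ c :=
    le_of_mul_le_mul_left (pooled_work ▸ h.work_le.trans hc) hsum
  split_ifs with hle
  · refine ⟨add_le_add h.le_left (initial hμ1 hμ2).le_left, above_average (by nlinarith), ?_⟩
    rw [pooled_work, mul_add μ1, mul_one_div_cancel hμ1.ne']
    linarith [h.work_le]
  · refine ⟨above_average (by nlinarith), add_le_add h.le_right (initial hμ1 hμ2).le_right, ?_⟩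
    rw [pooled_work, mul_add μ2, mul_one_div_cancel hμ2.ne']
    linarith [h.work_le]

end PooledDominates

theorem pooled_prearrival_sojourn_le_min_split_general
    (μ1 μ2 : ℝ) (hμ1 : 0 < μ1) (hμ2 : 0 < μ2)
    (Δ : ℕ → ℝ)
    (f1 f2 F g1 g2 G : ℕ → ℝ)
    (hf10 : f1 0 = 1 / μ1) (hf20 : f2 0 = 1 / μ2) (hF0 : F 0 = 1 / (μ1 + μ2))
    (hg1 : ∀ k, g1 (k + 1) = max (f1 k - Δ k) (1 / μ1))
    (hg2 : ∀ k, g2 (k + 1) = max (f2 k - Δ k) (1 / μ2))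
    (hG : ∀ k, G (k + 1) = max (F k - Δ k) (1 / (μ1 + μ2)))
    (hf1 : ∀ k, f1 (k + 1) =
      if g1 (k + 1) ≤ g2 (k + 1) then g1 (k + 1) + 1 / μ1 else g1 (k + 1))
    (hf2 : ∀ k, f2 (k + 1) =
      if g1 (k + 1) ≤ g2 (k + 1) then g2 (k + 1) else g2 (k + 1) + 1 / μ2)
    (hF : ∀ k, F (k + 1) = G (k + 1) + 1 / (μ1 + μ2)) :
    ∀ k, 1 ≤ k → G k ≤ min (g1 k) (g2 k) := by
  have prearrival : ∀ k, PooledDominates μ1 μ2 (F k) (f1 k) (f2 k) →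
      PooledDominates μ1 μ2 (G (k + 1)) (g1 (k + 1)) (g2 (k + 1)) := fun k h => by
    rw [hG, hg1, hg2]
    exact h.drain hμ1 hμ2 (Δ k)
  have postarrival : ∀ k, PooledDominates μ1 μ2 (F k) (f1 k) (f2 k) := by
    intro k
    induction k with
    | zero => rw [hF0, hf10, hf20]; exact PooledDominates.initial hμ1 hμ2
    | succ k ih =>
      rw [hF, hf1, hf2]
      exact (prearrival k ih).arrive hμ1 hμ2
  rintro (_ | k) hk
  · omega
  · have h := prearrival k (postarrival k)
    exact le_min h.le_left h.le_right

/-- Two-server greedy model (all customers admitted): for every `k ≥ 1`, the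
pre-arrival sojourn time at the pooled server never exceeds the minimum of the
pre-arrival sojourn times at the two split servers. -/
theorem pooled_prearrival_sojourn_le_min_split
    (μ1 μ2 : ℝ) (hμ1 : 0 < μ1) (hμ2 : 0 < μ2)
    (Δ : ℕ → ℝ) (hΔ : ∀ k, 0 ≤ Δ k)
    (f1 f2 F g1 g2 G : ℕ → ℝ)
    (hf10 : f1 0 = 1 / μ1) (hf20 : f2 0 = 1 / μ2) (hF0 : F 0 = 1 / (μ1 + μ2))
    (hg1 : ∀ k, g1 (k + 1) = max (f1 k - Δ k) (1 / μ1))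
    (hg2 : ∀ k, g2 (k + 1) = max (f2 k - Δ k) (1 / μ2))
    (hG : ∀ k, G (k + 1) = max (F k - Δ k) (1 / (μ1 + μ2)))
    (hf1 : ∀ k, f1 (k + 1) =
      if g1 (k + 1) ≤ g2 (k + 1) then g1 (k + 1) + 1 / μ1 else g1 (k + 1))
    (hf2 : ∀ k, f2 (k + 1) =
      if g1 (k + 1) ≤ g2 (k + 1) then g2 (k + 1) else g2 (k + 1) + 1 / μ2)
    (hF : ∀ k, F (k + 1) = G (k + 1) + 1 / (μ1 + μ2)) :
    ∀ k, 1 ≤ k → G k ≤ min (g1 k) (g2 k) :=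
  pooled_prearrival_sojourn_le_min_split_general μ1 μ2 hμ1 hμ2 Δ f1 f2 F g1 g2 G hf10 hf20 hF0 hg1
    hg2 hG hf1 hf2 hF
end

section
/- For all k ≥ 1, the pooled-server pre-arrival workload never exceeds the total split-server pre-arrival workload: (μ1+μ2)·G(k) ≤ μ1·g1(k) + μ2·g2(k) − 1. -/
/-- Two-server greedy model (all customers admitted): for every `k ≥ 1`, the
pooled-server pre-arrival workload never exceeds the total split-server
pre-arrival workload: `(μ1+μ2)·G k ≤ μ1·g1 k + μ2·g2 k − 1`. -/
theorem pooled_prearrival_workload_le_split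
    (μ1 μ2 : ℝ) (hμ1 : 0 < μ1) (hμ2 : 0 < μ2)
    (Δ : ℕ → ℝ) (hΔ : ∀ k, 0 ≤ Δ k)
    (f1 f2 F g1 g2 G : ℕ → ℝ)
    (hf10 : f1 0 = 1 / μ1) (hf20 : f2 0 = 1 / μ2) (hF0 : F 0 = 1 / (μ1 + μ2))
    (hg1 : ∀ k, g1 (k + 1) = max (f1 k - Δ k) (1 / μ1))
    (hg2 : ∀ k, g2 (k + 1) = max (f2 k - Δ k) (1 / μ2))
    (hG : ∀ k, G (k + 1) = max (F k - Δ k) (1 / (μ1 + μ2)))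
    (hf1 : ∀ k, f1 (k + 1) =
      if g1 (k + 1) ≤ g2 (k + 1) then g1 (k + 1) + 1 / μ1 else g1 (k + 1))
    (hf2 : ∀ k, f2 (k + 1) =
      if g1 (k + 1) ≤ g2 (k + 1) then g2 (k + 1) else g2 (k + 1) + 1 / μ2)
    (hF : ∀ k, F (k + 1) = G (k + 1) + 1 / (μ1 + μ2)) :
    ∀ k, 1 ≤ k → (μ1 + μ2) * G k ≤ μ1 * g1 k + μ2 * g2 k - 1 := by
  have hs : (0:ℝ) < μ1 + μ2 := by linarith
  have e1 : μ1 * (1 / μ1) = 1 := mul_one_div_cancel hμ1.ne'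
  have e2 : μ2 * (1 / μ2) = 1 := mul_one_div_cancel hμ2.ne'
  have es : (μ1 + μ2) * (1 / (μ1 + μ2)) = 1 := mul_one_div_cancel hs.ne'
  -- key step: post-arrival invariant implies pre-arrival invariant at next index
  have pre : ∀ j, (μ1 + μ2) * F j ≤ μ1 * f1 j + μ2 * f2 j - 1 →
      (μ1 + μ2) * G (j + 1) ≤ μ1 * g1 (j + 1) + μ2 * g2 (j + 1) - 1 := by
    intro j ih
    rw [hG, hg1, hg2,
      mul_max_of_nonneg _ _ hs.le, mul_max_of_nonneg _ _ hμ1.le,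
      mul_max_of_nonneg _ _ hμ2.le, e1, e2, es]
    set a := μ1 * (f1 j - Δ j) with ha
    set b := μ2 * (f2 j - Δ j) with hb
    have hx : (μ1 + μ2) * (F j - Δ j) ≤ a + b - 1 := by
      rw [ha, hb, mul_sub, mul_sub, mul_sub]; linarith
    have h1 : a ≤ max a 1 := le_max_left _ _
    have h2 : (1:ℝ) ≤ max a 1 := le_max_right _ _
    have h3 : b ≤ max b 1 := le_max_left _ _
    have h4 : (1:ℝ) ≤ max b 1 := le_max_right _ _
    refine max_le ?_ ?_ <;> linarith
  -- post-arrival invariant by induction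
  have Q : ∀ j, (μ1 + μ2) * F j ≤ μ1 * f1 j + μ2 * f2 j - 1 := by
    intro j
    induction j with
    | zero =>
      rw [hf10, hf20, hF0, e1, e2, es]; norm_num
    | succ j ih =>
      have hpre := pre j ih
      rw [hF j, hf1 j, hf2 j, mul_add, es]
      split_ifs with h
      · rw [mul_add, e1]; linarith
      · rw [mul_add, e2]; linarith
  intro k hk
  obtain ⟨j, rfl⟩ := Nat.exists_eq_add_of_le hk
  rw [Nat.add_comm]; exact pre j (Q j)
end

section
/- If every arriving customer is admitted by the two-server system, then every arriving customer is also admitted by the pooled server; that is, if for all k ≥ 1 we have R(k) − c(k)·min(g1(k), g2(k)) > 0, then for all k ≥ 1 we have R(k) − c(k)·G(k) > 0. -/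
/-!
The pooled server never lags behind either split server: writing `F, f1, f2` for the
virtual sojourn times, the relations `F ≤ f1`, `F ≤ f2` and
`(μ1 + μ2) F + 1 ≤ μ1 f1 + μ2 f2` are preserved both by the passage of time (with the
floors `1/μ`) and by an arrival routed to the shorter split queue. The weighted relation
is what bounds the pooled value against the split server that did not receive the job.
Hence before every arrival `G ≤ min g1 g2`, and a nonnegative waiting cost turns this
into a higher utility for the pooled server.
-/

def SplitDominatesPool (μ1 μ2 f1 f2 F : ℝ) : Prop :=
  F ≤ f1 ∧ F ≤ f2 ∧ (μ1 + μ2) * F + 1 ≤ μ1 * f1 + μ2 * f2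

namespace SplitDominatesPool

variable {μ1 μ2 f1 f2 F : ℝ}

theorem symm (h : SplitDominatesPool μ1 μ2 f1 f2 F) : SplitDominatesPool μ2 μ1 f2 f1 F := by
  obtain ⟨hF1, hF2, hw⟩ := h
  exact ⟨hF2, hF1, by linarith⟩

variable (hμ1 : 0 < μ1) (hμ2 : 0 < μ2)
include hμ1 hμ2

theorem init : SplitDominatesPool μ1 μ2 (1 / μ1) (1 / μ2) (1 / (μ1 + μ2)) := by
  refine ⟨?_, ?_, ?_⟩
  · exact one_div_le_one_div_of_le hμ1 (by linarith)
  · exact one_div_le_one_div_of_le hμ2 (by linarith)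
  · field_simp
    norm_num

theorem drain (h : SplitDominatesPool μ1 μ2 f1 f2 F) (Δ : ℝ) :
    SplitDominatesPool μ1 μ2 (max (f1 - Δ) (1 / μ1)) (max (f2 - Δ) (1 / μ2))
      (max (F - Δ) (1 / (μ1 + μ2))) := by
  obtain ⟨h1, h2, -⟩ := init hμ1 hμ2
  obtain ⟨hF1, hF2, hw⟩ := h
  have floor1 : 1 ≤ μ1 * max (f1 - Δ) (1 / μ1) := by
    calc (1 : ℝ) = μ1 * (1 / μ1) := by field_simp
      _ ≤ _ := mul_le_mul_of_nonneg_left (le_max_right _ _) hμ1.le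
  have floor2 : 1 ≤ μ2 * max (f2 - Δ) (1 / μ2) := by
    calc (1 : ℝ) = μ2 * (1 / μ2) := by field_simp
      _ ≤ _ := mul_le_mul_of_nonneg_left (le_max_right _ _) hμ2.le
  have shift1 : μ1 * (f1 - Δ) ≤ μ1 * max (f1 - Δ) (1 / μ1) :=
    mul_le_mul_of_nonneg_left (le_max_left _ _) hμ1.le
  have shift2 : μ2 * (f2 - Δ) ≤ μ2 * max (f2 - Δ) (1 / μ2) :=
    mul_le_mul_of_nonneg_left (le_max_left _ _) hμ2.le
  refine ⟨max_le_max (by linarith) h1, max_le_max (by linarith) h2, ?_⟩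
  rcases max_cases (F - Δ) (1 / (μ1 + μ2)) with ⟨hmax, -⟩ | ⟨hmax, -⟩
  · rw [hmax]
    linarith
  · have : (μ1 + μ2) * (1 / (μ1 + μ2)) = 1 := by field_simp
    rw [hmax, this]
    linarith

theorem arrive_left (h : SplitDominatesPool μ1 μ2 f1 f2 F) (hle : f1 ≤ f2) :
    SplitDominatesPool μ1 μ2 (f1 + 1 / μ1) f2 (F + 1 / (μ1 + μ2)) := by
  obtain ⟨hF1, hF2, hw⟩ := h
  have hδ : 1 / (μ1 + μ2) ≤ 1 / μ1 := one_div_le_one_div_of_le hμ1 (by linarith)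
  have hsδ : (μ1 + μ2) * (F + 1 / (μ1 + μ2)) = (μ1 + μ2) * F + 1 := by field_simp
  have h1δ : μ1 * (f1 + 1 / μ1) = μ1 * f1 + 1 := by field_simp
  refine ⟨by linarith, ?_, by rw [hsδ, h1δ]; linarith⟩
  have : (μ1 + μ2) * (F + 1 / (μ1 + μ2)) ≤ (μ1 + μ2) * f2 :=
    calc (μ1 + μ2) * (F + 1 / (μ1 + μ2)) ≤ μ1 * f1 + μ2 * f2 := by linarith
      _ ≤ (μ1 + μ2) * f2 := by nlinarith
  exact le_of_mul_le_mul_left this (by linarith)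

theorem arrive (h : SplitDominatesPool μ1 μ2 f1 f2 F) :
    SplitDominatesPool μ1 μ2 (if f1 ≤ f2 then f1 + 1 / μ1 else f1)
      (if f1 ≤ f2 then f2 else f2 + 1 / μ2) (F + 1 / (μ1 + μ2)) := by
  split_ifs with hle
  · exact h.arrive_left hμ1 hμ2 hle
  · have := h.symm.arrive_left hμ2 hμ1 (le_of_not_ge hle)
    rw [add_comm μ2 μ1] at this
    exact this.symm

end SplitDominatesPool

theorem admitted_by_split_admitted_by_pool_general
    (μ1 μ2 : ℝ) (hμ1 : 0 < μ1) (hμ2 : 0 < μ2)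
    (Δ : ℕ → ℝ)
    (R c : ℕ → ℝ) (hc : ∀ k, 0 ≤ c k)
    (f1 f2 F g1 g2 G : ℕ → ℝ)
    (hf10 : f1 0 = 1 / μ1) (hf20 : f2 0 = 1 / μ2) (hF0 : F 0 = 1 / (μ1 + μ2))
    (hg1 : ∀ k, g1 (k + 1) = max (f1 k - Δ k) (1 / μ1))
    (hg2 : ∀ k, g2 (k + 1) = max (f2 k - Δ k) (1 / μ2))
    (hG : ∀ k, G (k + 1) = max (F k - Δ k) (1 / (μ1 + μ2)))
    (hf1 : ∀ k, f1 (k + 1) =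
      if g1 (k + 1) ≤ g2 (k + 1) then g1 (k + 1) + 1 / μ1 else g1 (k + 1))
    (hf2 : ∀ k, f2 (k + 1) =
      if g1 (k + 1) ≤ g2 (k + 1) then g2 (k + 1) else g2 (k + 1) + 1 / μ2)
    (hF : ∀ k, F (k + 1) = G (k + 1) + 1 / (μ1 + μ2))
    (hadm : ∀ k, 1 ≤ k → 0 < R k - c k * min (g1 k) (g2 k)) :
    ∀ k, 1 ≤ k → 0 < R k - c k * G k := by
  have pre : ∀ k, SplitDominatesPool μ1 μ2 (f1 k) (f2 k) (F k) →
      SplitDominatesPool μ1 μ2 (g1 (k + 1)) (g2 (k + 1)) (G (k + 1)) := by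
    intro k h
    rw [hg1, hg2, hG]
    exact h.drain hμ1 hμ2 (Δ k)
  have post : ∀ k, SplitDominatesPool μ1 μ2 (f1 k) (f2 k) (F k) := by
    intro k
    induction k with
    | zero => rw [hf10, hf20, hF0]; exact .init hμ1 hμ2
    | succ k ih => rw [hf1, hf2, hF]; exact (pre k ih).arrive hμ1 hμ2
  intro k hk
  obtain ⟨j, rfl⟩ := Nat.exists_eq_add_of_le' hk
  obtain ⟨hG1, hG2, -⟩ := pre j (post j)
  have := mul_le_mul_of_nonneg_left (le_min hG1 hG2) (hc (j + 1))
  linarith [hadm (j + 1) hk]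

/-- If every arriving customer is admitted by the two-server system
(`R k − c k · min (g1 k) (g2 k) > 0` for all `k ≥ 1`), then every arriving
customer is also admitted by the pooled server (`R k − c k · G k > 0`). -/
theorem admitted_by_split_admitted_by_pool
    (μ1 μ2 : ℝ) (hμ1 : 0 < μ1) (hμ2 : 0 < μ2)
    (Δ : ℕ → ℝ) (hΔ : ∀ k, 0 ≤ Δ k)
    (R c : ℕ → ℝ) (hc : ∀ k, 0 ≤ c k)
    (f1 f2 F g1 g2 G : ℕ → ℝ)
    (hf10 : f1 0 = 1 / μ1) (hf20 : f2 0 = 1 / μ2) (hF0 : F 0 = 1 / (μ1 + μ2))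
    (hg1 : ∀ k, g1 (k + 1) = max (f1 k - Δ k) (1 / μ1))
    (hg2 : ∀ k, g2 (k + 1) = max (f2 k - Δ k) (1 / μ2))
    (hG : ∀ k, G (k + 1) = max (F k - Δ k) (1 / (μ1 + μ2)))
    (hf1 : ∀ k, f1 (k + 1) =
      if g1 (k + 1) ≤ g2 (k + 1) then g1 (k + 1) + 1 / μ1 else g1 (k + 1))
    (hf2 : ∀ k, f2 (k + 1) =
      if g1 (k + 1) ≤ g2 (k + 1) then g2 (k + 1) else g2 (k + 1) + 1 / μ2)
    (hF : ∀ k, F (k + 1) = G (k + 1) + 1 / (μ1 + μ2))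
    (hadm : ∀ k, 1 ≤ k → 0 < R k - c k * min (g1 k) (g2 k)) :
    ∀ k, 1 ≤ k → 0 < R k - c k * G k :=
  admitted_by_split_admitted_by_pool_general μ1 μ2 hμ1 hμ2 Δ R c hc f1 f2 F g1 g2 G hf10 hf20 hF0
    hg1 hg2 hG hf1 hf2 hF hadm
end

section
/- (Lemma 1.) For every n ≥ 0, the number of customers among the first n arrivals admitted by the pooled server of rate μ1+μ2 is at least the number admitted by the two-server system with rates μ1 and μ2: |{ 1 ≤ k ≤ n : A_split(k) }| ≤ |{ 1 ≤ k ≤ n : A_pool(k) }|. Consequently, under equal tolls (revenue equal to a common toll θ ≥ 0 times the number of admitted customers), splitting a server into two equal-toll servers never yields more revenue than the pooled single server. -/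
/-- Tower invariant for the pooling coupling. -/
def PoolInv (δ1 δ2 δ F f1 f2 : ℝ) (d : ℕ) : Prop :=
  (∀ a : ℕ, d ≤ a → F + ((a : ℝ) - d) * δ ≤ f1 + a * δ1) ∧
  (∀ b : ℕ, d ≤ b → F + ((b : ℝ) - d) * δ ≤ f2 + b * δ2) ∧
  (∀ a b : ℕ, d ≤ a + b + 1 →
    F + (((a : ℝ) + b + 1) - d) * δ ≤ max (f1 + a * δ1) (f2 + b * δ2))

lemma pool_harmonic {δ1 δ2 δ : ℝ} (h1 : 0 < δ1) (h2 : 0 < δ2)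
    (hh : δ1 * δ2 = δ * (δ1 + δ2)) (a b : ℕ) :
    ((a : ℝ) + b + 2) * δ ≤ max (((a : ℝ) + 1) * δ1) (((b : ℝ) + 1) * δ2) := by
  by_contra hcon
  push_neg at hcon
  have ha := lt_of_le_of_lt (le_max_left (((a : ℝ) + 1) * δ1) (((b : ℝ) + 1) * δ2)) hcon
  have hb := lt_of_le_of_lt (le_max_right (((a : ℝ) + 1) * δ1) (((b : ℝ) + 1) * δ2)) hcon
  have h3 := mul_lt_mul_of_pos_right ha h2
  have h4 := mul_lt_mul_of_pos_right hb h1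
  have hna : (0 : ℝ) ≤ (a : ℝ) := Nat.cast_nonneg a
  have hnb : (0 : ℝ) ≤ (b : ℝ) := Nat.cast_nonneg b
  nlinarith [h3, h4, hh]

lemma poolInv_swap {δ1 δ2 δ F f1 f2 : ℝ} {d : ℕ}
    (h : PoolInv δ1 δ2 δ F f1 f2 d) : PoolInv δ2 δ1 δ F f2 f1 d := by
  obtain ⟨h2, h1, h12⟩ := h
  refine ⟨h1, h2, fun a b hab => ?_⟩
  have := h12 b a (by omega)
  rw [max_comm] at this
  push_cast at this ⊢
  linarith

lemma poolInv_base {δ1 δ2 δ : ℝ} (h1 : 0 < δ1) (h2 : 0 < δ2)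
    (hle1 : δ ≤ δ1) (hle2 : δ ≤ δ2) (hδ : 0 < δ)
    (hh : δ1 * δ2 = δ * (δ1 + δ2)) : PoolInv δ1 δ2 δ δ δ1 δ2 0 := by
  refine ⟨fun a _ => ?_, fun b _ => ?_, fun a b _ => ?_⟩
  · have : (a : ℝ) * δ ≤ (a : ℝ) * δ1 :=
      mul_le_mul_of_nonneg_left hle1 (Nat.cast_nonneg a)
    push_cast; linarith
  · have : (b : ℝ) * δ ≤ (b : ℝ) * δ2 :=
      mul_le_mul_of_nonneg_left hle2 (Nat.cast_nonneg b)
    push_cast; linarith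
  · have hmain := pool_harmonic h1 h2 hh a b
    have e1 : ((a : ℝ) + 1) * δ1 = δ1 + a * δ1 := by ring
    have e2 : ((b : ℝ) + 1) * δ2 = δ2 + b * δ2 := by ring
    rw [e1, e2] at hmain
    push_cast; linarith

lemma poolInv_service {δ1 δ2 δ F f1 f2 Δ : ℝ} {d : ℕ} (h1 : 0 < δ1) (h2 : 0 < δ2)
    (hle1 : δ ≤ δ1) (hle2 : δ ≤ δ2) (hδ : 0 < δ)
    (hh : δ1 * δ2 = δ * (δ1 + δ2))
    (h : PoolInv δ1 δ2 δ F f1 f2 d) :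
    PoolInv δ1 δ2 δ (max (F - Δ) δ) (max (f1 - Δ) δ1) (max (f2 - Δ) δ2) d := by
  obtain ⟨hP1, hP2, hP12⟩ := h
  have hdδ : (0:ℝ) ≤ (d : ℝ) * δ := by positivity
  refine ⟨fun a ha => ?_, fun b hb => ?_, fun a b hab => ?_⟩
  · rw [← max_add_add_right]
    apply max_le
    · have := hP1 a ha
      have : F - Δ + ((a : ℝ) - d) * δ ≤ (f1 - Δ) + a * δ1 := by linarith
      exact le_trans this (by have := le_max_left (f1 - Δ) δ1; linarith)
    · have haδ : ((a : ℝ) - d) * δ ≤ (a : ℝ) * δ1 := by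
        have h1' : ((a : ℝ) - d) * δ ≤ (a : ℝ) * δ := by nlinarith
        have h2' : (a : ℝ) * δ ≤ (a : ℝ) * δ1 :=
          mul_le_mul_of_nonneg_left hle1 (Nat.cast_nonneg a)
        linarith
      have := le_max_right (f1 - Δ) δ1
      linarith
  · rw [← max_add_add_right]
    apply max_le
    · have := hP2 b hb
      have : F - Δ + ((b : ℝ) - d) * δ ≤ (f2 - Δ) + b * δ2 := by linarith
      exact le_trans this (by have := le_max_left (f2 - Δ) δ2; linarith)
    · have hbδ : ((b : ℝ) - d) * δ ≤ (b : ℝ) * δ2 := by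
        have h1' : ((b : ℝ) - d) * δ ≤ (b : ℝ) * δ := by nlinarith
        have h2' : (b : ℝ) * δ ≤ (b : ℝ) * δ2 :=
          mul_le_mul_of_nonneg_left hle2 (Nat.cast_nonneg b)
        linarith
      have := le_max_right (f2 - Δ) δ2
      linarith
  · rw [← max_add_add_right]
    apply max_le
    · have hbig := hP12 a b hab
      have hb1 : f1 + (a:ℝ) * δ1 - Δ ≤ max (max (f1 - Δ) δ1 + a * δ1) (max (f2 - Δ) δ2 + b * δ2) := by
        have := le_max_left (f1 - Δ) δ1
        have := le_max_left (max (f1 - Δ) δ1 + (a:ℝ) * δ1) (max (f2 - Δ) δ2 + (b:ℝ) * δ2)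
        linarith
      have hb2 : f2 + (b:ℝ) * δ2 - Δ ≤ max (max (f1 - Δ) δ1 + a * δ1) (max (f2 - Δ) δ2 + b * δ2) := by
        have := le_max_left (f2 - Δ) δ2
        have := le_max_right (max (f1 - Δ) δ1 + (a:ℝ) * δ1) (max (f2 - Δ) δ2 + (b:ℝ) * δ2)
        linarith
      have hmax : max (f1 + (a:ℝ) * δ1) (f2 + (b:ℝ) * δ2) - Δ ≤
          max (max (f1 - Δ) δ1 + a * δ1) (max (f2 - Δ) δ2 + b * δ2) := by
        rcases max_cases (f1 + (a:ℝ) * δ1) (f2 + (b:ℝ) * δ2) with ⟨he, _⟩ | ⟨he, _⟩ <;>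
          rw [he] <;> linarith
      linarith
    · have hmain := pool_harmonic h1 h2 hh a b
      have hb1 : ((a:ℝ) + 1) * δ1 ≤ max (max (f1 - Δ) δ1 + a * δ1) (max (f2 - Δ) δ2 + b * δ2) := by
        have := le_max_right (f1 - Δ) δ1
        have := le_max_left (max (f1 - Δ) δ1 + (a:ℝ) * δ1) (max (f2 - Δ) δ2 + (b:ℝ) * δ2)
        nlinarith
      have hb2 : ((b:ℝ) + 1) * δ2 ≤ max (max (f1 - Δ) δ1 + a * δ1) (max (f2 - Δ) δ2 + b * δ2) := by
        have := le_max_right (f2 - Δ) δ2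
        have := le_max_right (max (f1 - Δ) δ1 + (a:ℝ) * δ1) (max (f2 - Δ) δ2 + (b:ℝ) * δ2)
        nlinarith
      have hmax : max (((a:ℝ) + 1) * δ1) (((b:ℝ) + 1) * δ2) ≤
          max (max (f1 - Δ) δ1 + a * δ1) (max (f2 - Δ) δ2 + b * δ2) := max_le hb1 hb2
      nlinarith

lemma poolInv_pool {δ1 δ2 δ G g1 g2 : ℝ} {d : ℕ}
    (h : PoolInv δ1 δ2 δ G g1 g2 d) : PoolInv δ1 δ2 δ (G + δ) g1 g2 (d + 1) := by
  obtain ⟨hP1, hP2, hP12⟩ := h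
  refine ⟨fun a ha => ?_, fun b hb => ?_, fun a b hab => ?_⟩
  · have := hP1 a (by omega); push_cast; linarith
  · have := hP2 b (by omega); push_cast; linarith
  · have := hP12 a b (by omega); push_cast; linarith

lemma poolInv_split {δ1 δ2 δ G g1 g2 : ℝ} {d : ℕ} (h2 : 0 < δ2)
    (hg : g1 ≤ g2) (h : PoolInv δ1 δ2 δ G g1 g2 (d + 1)) :
    PoolInv δ1 δ2 δ G (g1 + δ1) g2 d := by
  obtain ⟨hP1, hP2, hP12⟩ := h
  refine ⟨fun a ha => ?_, fun b hb => ?_, fun a b hab => ?_⟩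
  · have := hP1 (a + 1) (by omega); push_cast at this ⊢; linarith
  · have h0 := hP12 0 b (by omega)
    have hbδ : (0:ℝ) ≤ (b : ℝ) * δ2 := by positivity
    have hmax : max (g1 + (0:ℕ) * δ1) (g2 + b * δ2) ≤ g2 + (b:ℝ) * δ2 := by
      apply max_le _ le_rfl
      push_cast; linarith
    push_cast at h0 hmax ⊢
    linarith
  · have h0 := hP12 (a + 1) b (by omega)
    have e1 : g1 + ((a:ℝ) + 1) * δ1 = g1 + δ1 + a * δ1 := by ring
    push_cast at h0 ⊢
    rw [e1] at h0
    linarith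

lemma card_filter_Icc_succ (p : ℕ → Prop) [DecidablePred p] (n : ℕ) :
    ((Finset.Icc 1 (n + 1)).filter p).card =
    ((Finset.Icc 1 n).filter p).card + if p (n + 1) then 1 else 0 := by
  have h : Finset.Icc 1 (n + 1) = insert (n + 1) (Finset.Icc 1 n) := by
    ext x; simp [Finset.mem_Icc, Finset.mem_insert]; omega
  rw [h, Finset.filter_insert]
  by_cases hp : p (n + 1)
  · rw [if_pos hp, if_pos hp, Finset.card_insert_of_notMem]
    simp [Finset.mem_filter, Finset.mem_Icc]
  · rw [if_neg hp, if_neg hp, add_zero]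

/-- Lemma 1: in the two-server greedy model with balking, for every `n` the
number of customers among the first `n` arrivals admitted by the pooled server
of rate `μ1 + μ2` is at least the number admitted by the two-server system;
consequently, under a common toll `θ ≥ 0` the split system never yields more
revenue than the pooled single server. -/
theorem split_throughput_le_pooled_throughput
    (μ1 μ2 : ℝ) (hμ1 : 0 < μ1) (hμ2 : 0 < μ2)
    (Δ : ℕ → ℝ) (hΔ : ∀ k, 0 ≤ Δ k)
    (R c : ℕ → ℝ) (hc : ∀ k, 0 ≤ c k)
    (f1 f2 g1 g2 F G : ℕ → ℝ)
    (Asplit Apool : ℕ → Prop) [DecidablePred Asplit] [DecidablePred Apool]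
    (hf10 : f1 0 = 1 / μ1) (hf20 : f2 0 = 1 / μ2) (hF0 : F 0 = 1 / (μ1 + μ2))
    (hg1 : ∀ k, g1 (k + 1) = max (f1 k - Δ k) (1 / μ1))
    (hg2 : ∀ k, g2 (k + 1) = max (f2 k - Δ k) (1 / μ2))
    (hG : ∀ k, G (k + 1) = max (F k - Δ k) (1 / (μ1 + μ2)))
    (hAs : ∀ k, Asplit (k + 1) ↔
      0 < R (k + 1) - c (k + 1) * min (g1 (k + 1)) (g2 (k + 1)))
    (hf1 : ∀ k, f1 (k + 1) =
      if Asplit (k + 1) ∧ g1 (k + 1) ≤ g2 (k + 1)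
      then g1 (k + 1) + 1 / μ1 else g1 (k + 1))
    (hf2 : ∀ k, f2 (k + 1) =
      if Asplit (k + 1) ∧ g2 (k + 1) < g1 (k + 1)
      then g2 (k + 1) + 1 / μ2 else g2 (k + 1))
    (hAp : ∀ k, Apool (k + 1) ↔ 0 < R (k + 1) - c (k + 1) * G (k + 1))
    (hF : ∀ k, F (k + 1) =
      if Apool (k + 1) then G (k + 1) + 1 / (μ1 + μ2) else G (k + 1)) :
    ∀ n, ((Finset.Icc 1 n).filter Asplit).card ≤ ((Finset.Icc 1 n).filter Apool).card ∧
      ∀ θ : ℝ, 0 ≤ θ →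
        θ * ((Finset.Icc 1 n).filter Asplit).card ≤
          θ * ((Finset.Icc 1 n).filter Apool).card := by
  have hμ12 : 0 < μ1 + μ2 := by linarith
  set δ1 : ℝ := 1 / μ1 with hδ1def
  set δ2 : ℝ := 1 / μ2 with hδ2def
  set δ : ℝ := 1 / (μ1 + μ2) with hδdef
  have h1 : 0 < δ1 := by positivity
  have h2 : 0 < δ2 := by positivity
  have hδ : 0 < δ := by positivity
  have hle1 : δ ≤ δ1 := by
    rw [hδdef, hδ1def]
    apply one_div_le_one_div_of_le hμ1; linarith
  have hle2 : δ ≤ δ2 := by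
    rw [hδdef, hδ2def]
    apply one_div_le_one_div_of_le hμ2; linarith
  have hh : δ1 * δ2 = δ * (δ1 + δ2) := by
    rw [hδdef, hδ1def, hδ2def]
    field_simp; ring
  have key : ∀ n,
      ((Finset.Icc 1 n).filter Asplit).card ≤ ((Finset.Icc 1 n).filter Apool).card ∧
      PoolInv δ1 δ2 δ (F n) (f1 n) (f2 n)
        (((Finset.Icc 1 n).filter Apool).card - ((Finset.Icc 1 n).filter Asplit).card) := by
    intro n
    induction n with
    | zero =>
      have he : Finset.Icc 1 0 = (∅ : Finset ℕ) := by decide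
      rw [he]
      simp only [Finset.filter_empty, Finset.card_empty, Nat.sub_zero]
      refine ⟨le_rfl, ?_⟩
      rw [hf10, hf20, hF0]
      exact poolInv_base h1 h2 hle1 hle2 hδ hh
    | succ n ih =>
      obtain ⟨ihc, ihI⟩ := ih
      set Ns := ((Finset.Icc 1 n).filter Asplit).card with hNs
      set Np := ((Finset.Icc 1 n).filter Apool).card with hNp
      have hInvg : PoolInv δ1 δ2 δ (G (n + 1)) (g1 (n + 1)) (g2 (n + 1)) (Np - Ns) := by
        rw [hG n, hg1 n, hg2 n]
        exact poolInv_service h1 h2 hle1 hle2 hδ hh ihI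
      rw [card_filter_Icc_succ Asplit n, card_filter_Icc_succ Apool n]
      by_cases hs : Asplit (n + 1) <;> by_cases hp : Apool (n + 1)
      · -- both admit
        rw [if_pos hs, if_pos hp]
        refine ⟨by omega, ?_⟩
        have hd : Np + 1 - (Ns + 1) = Np - Ns := by omega
        rw [hd, hF n, if_pos hp, hf1 n, hf2 n]
        by_cases hgle : g1 (n + 1) ≤ g2 (n + 1)
        · rw [if_pos ⟨hs, hgle⟩, if_neg (fun h => absurd h.2 (not_lt.mpr hgle))]
          exact poolInv_split h2 hgle (poolInv_pool hInvg)
        · rw [if_neg (fun h => hgle h.2), if_pos ⟨hs, lt_of_not_ge hgle⟩]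
          exact poolInv_swap
            (poolInv_split h1 (le_of_lt (lt_of_not_ge hgle)) (poolInv_pool (poolInv_swap hInvg)))
      · -- split admits, pool rejects
        have hd1 : Ns + 1 ≤ Np := by
          by_contra h0
          have hd0 : Np - Ns = 0 := by omega
          rw [hd0] at hInvg
          have hG1 : G (n + 1) ≤ g1 (n + 1) := by
            have := hInvg.1 0 (le_refl 0); push_cast at this; linarith
          have hG2 : G (n + 1) ≤ g2 (n + 1) := by
            have := hInvg.2.1 0 (le_refl 0); push_cast at this; linarith
          have hGm : G (n + 1) ≤ min (g1 (n + 1)) (g2 (n + 1)) := le_min hG1 hG2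
          have hcm : c (n + 1) * G (n + 1) ≤
              c (n + 1) * min (g1 (n + 1)) (g2 (n + 1)) :=
            mul_le_mul_of_nonneg_left hGm (hc (n + 1))
          have hAs' := (hAs n).mp hs
          have hAp' : ¬(0 < R (n + 1) - c (n + 1) * G (n + 1)) := fun h => hp ((hAp n).mpr h)
          push_neg at hAp'
          linarith
        rw [if_pos hs, if_neg hp]
        refine ⟨by omega, ?_⟩
        have hd : Np - Ns = (Np - (Ns + 1)) + 1 := by omega
        rw [hd] at hInvg
        have hd2 : Np + 0 - (Ns + 1) = Np - (Ns + 1) := by omega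
        rw [hd2, hF n, if_neg hp, hf1 n, hf2 n]
        by_cases hgle : g1 (n + 1) ≤ g2 (n + 1)
        · rw [if_pos ⟨hs, hgle⟩, if_neg (fun h => absurd h.2 (not_lt.mpr hgle))]
          exact poolInv_split h2 hgle hInvg
        · rw [if_neg (fun h => hgle h.2), if_pos ⟨hs, lt_of_not_ge hgle⟩]
          exact poolInv_swap
            (poolInv_split h1 (le_of_lt (lt_of_not_ge hgle)) (poolInv_swap hInvg))
      · -- split rejects, pool admits
        rw [if_neg hs, if_pos hp]
        refine ⟨by omega, ?_⟩
        have hd : Np + 1 - (Ns + 0) = (Np - Ns) + 1 := by omega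
        rw [hd, hF n, if_pos hp, hf1 n, hf2 n,
          if_neg (fun h => hs h.1), if_neg (fun h => hs h.1)]
        exact poolInv_pool hInvg
      · -- both reject
        rw [if_neg hs, if_neg hp]
        refine ⟨by omega, ?_⟩
        have hd : Np + 0 - (Ns + 0) = Np - Ns := by omega
        rw [hd, hF n, if_neg hp, hf1 n, hf2 n,
          if_neg (fun h => hs h.1), if_neg (fun h => hs h.1)]
        exact hInvg
  intro n
  refine ⟨(key n).1, fun θ hθ => ?_⟩
  apply mul_le_mul_of_nonneg_left _ hθ
  exact_mod_cast (key n).1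
end

section
/- (Step 2 of Lemma 1.) Adding extra arrivals to a single server's arrival schedule never decreases its admitted throughput: if the schedule L' (arrival gaps, rewards, and cost rates) is obtained from the schedule L by deleting some subset of the customers (keeping arrival times, rewards, and costs of the remaining customers unchanged), then the total number of customers admitted by the single server under schedule L is at least the total number admitted under schedule L'. -/
/-!
Let `N m` count the customers among `1, …, m` admitted under `L` and `N' k` those among the
first `k` customers of `L'`. By induction on `k`, `N' k ≤ N (s k)` and
`F (s k) - N (s k) / μ ≤ F' k - N' k / μ`: every admission adds `1 / μ` to the sojourn time,
which afterwards only drains, so the backlog of `L` can exceed that of `L'` only by its admission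
surplus. When `L'` admits a customer that `L` turns away, the pre-arrival time under `L` is
strictly larger, which forces a strict surplus `N' k < N (s k)`, so the count inequality survives.
-/

open Finset

def admitCount (A : ℕ → Prop) [DecidablePred A] (m : ℕ) : ℕ := ((Icc 1 m).filter A).card

theorem admitCount_zero (A : ℕ → Prop) [DecidablePred A] : admitCount A 0 = 0 := by
  simp [admitCount]

theorem admitCount_succ (A : ℕ → Prop) [DecidablePred A] (m : ℕ) :
    admitCount A (m + 1) = admitCount A m + if A (m + 1) then 1 else 0 := by
  have hnew : m + 1 ∉ (Icc 1 m).filter A := fun h => by simp at h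
  rw [admitCount, admitCount, ← insert_Icc_right_eq_Icc_add_one (Nat.le_add_left 1 m),
    filter_insert]
  split_ifs
  · exact card_insert_of_notMem hnew
  · rfl

theorem admitCount_mono (A : ℕ → Prop) [DecidablePred A] : Monotone (admitCount A) :=
  fun _ _ h => card_le_card (filter_subset_filter _ (Icc_subset_Icc_right h))

theorem max_sub_le_max_sub_add {x y b D Δ : ℝ} (hΔ : 0 ≤ Δ) (hD : 0 ≤ D)
    (h : y ≤ max x b + D) : max (y - Δ) b ≤ max (x - Δ) b + D := by
  refine max_le ?_ (le_add_of_le_of_nonneg (le_max_right _ _) hD)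
  rcases le_total x b with hxb | hbx
  · rw [max_eq_right hxb] at h
    linarith [le_max_right (x - Δ) b]
  · rw [max_eq_left hbx] at h
    linarith [le_max_left (x - Δ) b]

structure IsServerRun (b : ℝ) (τ F G : ℕ → ℝ) (A : ℕ → Prop) [DecidablePred A] :
    Prop where
  pre_arrival : ∀ k, G (k + 1) = max (F k - (τ (k + 1) - τ k)) b
  post_arrival : ∀ k, F (k + 1) = if A (k + 1) then G (k + 1) + b else G (k + 1)

namespace IsServerRun

variable {b : ℝ} {τ F G : ℕ → ℝ} {A : ℕ → Prop} [DecidablePred A]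

theorem post_arrival_sub_admitCount (h : IsServerRun b τ F G A) (m : ℕ) :
    F (m + 1) - admitCount A (m + 1) * b = G (m + 1) - admitCount A m * b := by
  rw [h.post_arrival, admitCount_succ]
  split_ifs <;> push_cast <;> ring

theorem pre_arrival_le (h : IsServerRun b τ F G A) (hb : 0 ≤ b) (hτ : Monotone τ) {a m : ℕ}
    (ham : a ≤ m) :
    G (m + 1) ≤ max (F a - (τ (m + 1) - τ a)) b + (admitCount A m - admitCount A a) * b := by
  induction m, ham using Nat.le_induction with
  | base => simp [h.pre_arrival]
  | succ m ham ih =>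
    have hcount : (admitCount A a : ℝ) ≤ admitCount A (m + 1) := by
      exact_mod_cast admitCount_mono A (ham.trans m.le_succ)
    have hF : F (m + 1) ≤ max (F a - (τ (m + 1) - τ a)) b
        + (admitCount A (m + 1) - admitCount A a) * b := by
      linarith [h.post_arrival_sub_admitCount m]
    calc G (m + 1 + 1)
        ≤ max (F a - (τ (m + 1) - τ a) - (τ (m + 1 + 1) - τ (m + 1))) b
          + (admitCount A (m + 1) - admitCount A a) * b := by
          rw [h.pre_arrival]
          exact max_sub_le_max_sub_add (sub_nonneg.2 (hτ (m + 1).le_succ))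
            (mul_nonneg (sub_nonneg.2 hcount) hb) hF
      _ = max (F a - (τ (m + 1 + 1) - τ a)) b
          + (admitCount A (m + 1) - admitCount A a) * b := by ring_nf

end IsServerRun

section Comparison

variable {b : ℝ} {τ R c F G F' G' : ℕ → ℝ} {A A' : ℕ → Prop} [DecidablePred A]
  [DecidablePred A'] {s : ℕ → ℕ}

theorem pre_arrival_le_of_invariant (h : IsServerRun b τ F G A)
    (h' : IsServerRun b (τ ∘ s) F' G' A') (hb : 0 ≤ b) (hτ : Monotone τ) {k p : ℕ}
    (hkp : s k ≤ p) (hp : s (k + 1) = p + 1)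
    (hcount : admitCount A' k ≤ admitCount A (s k))
    (hsojourn : F (s k) - admitCount A (s k) * b ≤ F' k - admitCount A' k * b) :
    G (p + 1) ≤ G' (k + 1) + (admitCount A p - admitCount A' k) * b := by
  have hcount' : (admitCount A' k : ℝ) ≤ admitCount A (s k) := by exact_mod_cast hcount
  calc G (p + 1)
      ≤ max (F (s k) - (τ (p + 1) - τ (s k))) b + (admitCount A p - admitCount A (s k)) * b :=
        h.pre_arrival_le hb hτ hkp
    _ ≤ max (F' k - (τ (p + 1) - τ (s k))) b + (admitCount A (s k) - admitCount A' k) * b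
          + (admitCount A p - admitCount A (s k)) * b := by
        gcongr
        refine max_sub_le_max_sub_add (sub_nonneg.2 (hτ (hkp.trans p.le_succ)))
          (mul_nonneg (sub_nonneg.2 hcount') hb) ?_
        linarith [le_max_left (F' k) b]
    _ = G' (k + 1) + (admitCount A p - admitCount A' k) * b := by
        rw [h'.pre_arrival, Function.comp_apply, Function.comp_apply, hp]
        ring

theorem admitCount_le_and_sojourn_le (h : IsServerRun b τ F G A)
    (h' : IsServerRun b (τ ∘ s) F' G' A') (hb : 0 ≤ b) (hτ : Monotone τ) (hc : ∀ k, 0 ≤ c k)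
    (hs : StrictMono s) (hA : ∀ k, A (k + 1) ↔ 0 < R (k + 1) - c (k + 1) * G (k + 1))
    (hA' : ∀ k, A' (k + 1) ↔ 0 < R (s (k + 1)) - c (s (k + 1)) * G' (k + 1))
    (h0 : F (s 0) ≤ F' 0) (k : ℕ) :
    admitCount A' k ≤ admitCount A (s k) ∧
      F (s k) - admitCount A (s k) * b ≤ F' k - admitCount A' k * b := by
  induction k with
  | zero =>
    simp only [admitCount_zero, Nat.cast_zero, zero_mul, sub_zero, Nat.zero_le, true_and]
    exact (sub_le_self _ (by positivity)).trans h0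
  | succ k ih =>
    have hstep : s k < s (k + 1) := hs k.lt_succ_self
    obtain ⟨p, hp⟩ : ∃ p, s (k + 1) = p + 1 := ⟨s (k + 1) - 1, by omega⟩
    have hkp : s k ≤ p := by omega
    have hG := pre_arrival_le_of_invariant h h' hb hτ hkp hp ih.1 ih.2
    refine ⟨?_, ?_⟩
    · have hle := ih.1.trans (admitCount_mono A hkp)
      rw [hp, admitCount_succ, admitCount_succ]
      by_cases hadm' : A' (k + 1)
      · by_cases hadm : A (p + 1)
        · simp [hadm, hadm', hle]
        have hlt : G' (k + 1) < G (p + 1) := by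
          have hadmit := (hA' k).1 hadm'
          have hbalk := not_lt.1 (mt (hA p).2 hadm)
          rw [hp] at hadmit
          exact lt_of_mul_lt_mul_left (by linarith) (hc (p + 1))
        have hsurplus : 0 < (admitCount A p - admitCount A' k : ℝ) :=
          pos_of_mul_pos_left (by linarith) hb
        have : admitCount A' k < admitCount A p := by exact_mod_cast sub_pos.1 hsurplus
        simp only [hadm, hadm', if_true, if_false]
        omega
      · simp only [hadm', if_false]
        split_ifs <;> omega
    · rw [hp, h.post_arrival_sub_admitCount, h'.post_arrival_sub_admitCount]
      linarith

end Comparison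

theorem throughput_monotone_under_insertion_general
    (μ : ℝ) (hμ : 0 < μ)
    (n n' : ℕ) (t R c : ℕ → ℝ)
    (htmono : Monotone t) (hc : ∀ k, 0 ≤ c k)
    (s : ℕ → ℕ) (hs : StrictMono s) (hs0 : s 0 = 0) (hsle : s n' ≤ n)
    (F G : ℕ → ℝ) (A : ℕ → Prop) [DecidablePred A]
    (F' G' : ℕ → ℝ) (A' : ℕ → Prop) [DecidablePred A']
    (hF0 : F 0 = 1 / μ)
    (hG : ∀ k, G (k + 1) = max (F k - (t (k + 1) - t k)) (1 / μ))
    (hA : ∀ k, A (k + 1) ↔ 0 < R (k + 1) - c (k + 1) * G (k + 1))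
    (hF : ∀ k, F (k + 1) = if A (k + 1) then G (k + 1) + 1 / μ else G (k + 1))
    (hF'0 : F' 0 = 1 / μ)
    (hG' : ∀ k, G' (k + 1) = max (F' k - (t (s (k + 1)) - t (s k))) (1 / μ))
    (hA' : ∀ k, A' (k + 1) ↔ 0 < R (s (k + 1)) - c (s (k + 1)) * G' (k + 1))
    (hF' : ∀ k, F' (k + 1) =
      if A' (k + 1) then G' (k + 1) + 1 / μ else G' (k + 1)) :
    ((Finset.Icc 1 n').filter A').card ≤ ((Finset.Icc 1 n).filter A).card := by
  have hrun : IsServerRun (1 / μ) t F G A := ⟨hG, hF⟩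
  have hrun' : IsServerRun (1 / μ) (t ∘ s) F' G' A' := ⟨hG', hF'⟩
  have h0 : F (s 0) ≤ F' 0 := by rw [hs0, hF0, hF'0]
  calc admitCount A' n'
      ≤ admitCount A (s n') :=
        (admitCount_le_and_sojourn_le hrun hrun' (by positivity) htmono hc hs hA hA' h0 n').1
    _ ≤ admitCount A n := admitCount_mono A hsle

/-- Step 2 of Lemma 1: for a single server with balking, adding extra arrivals
to the arrival schedule never decreases the admitted throughput.  The schedule
`L'` (customers `s 1 < s 2 < … < s n'` selected from `L`'s customers
`1, …, n`, keeping their arrival times `t`, rewards `R`, and cost rates `c`)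
admits at most as many customers as the full schedule `L`. -/
theorem throughput_monotone_under_insertion
    (μ : ℝ) (hμ : 0 < μ)
    (n n' : ℕ) (t R c : ℕ → ℝ)
    (ht0 : t 0 = 0) (htmono : Monotone t) (hc : ∀ k, 0 ≤ c k)
    (s : ℕ → ℕ) (hs : StrictMono s) (hs0 : s 0 = 0) (hsle : s n' ≤ n)
    (F G : ℕ → ℝ) (A : ℕ → Prop) [DecidablePred A]
    (F' G' : ℕ → ℝ) (A' : ℕ → Prop) [DecidablePred A']
    (hF0 : F 0 = 1 / μ)
    (hG : ∀ k, G (k + 1) = max (F k - (t (k + 1) - t k)) (1 / μ))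
    (hA : ∀ k, A (k + 1) ↔ 0 < R (k + 1) - c (k + 1) * G (k + 1))
    (hF : ∀ k, F (k + 1) = if A (k + 1) then G (k + 1) + 1 / μ else G (k + 1))
    (hF'0 : F' 0 = 1 / μ)
    (hG' : ∀ k, G' (k + 1) = max (F' k - (t (s (k + 1)) - t (s k))) (1 / μ))
    (hA' : ∀ k, A' (k + 1) ↔ 0 < R (s (k + 1)) - c (s (k + 1)) * G' (k + 1))
    (hF' : ∀ k, F' (k + 1) =
      if A' (k + 1) then G' (k + 1) + 1 / μ else G' (k + 1)) :
    ((Finset.Icc 1 n').filter A').card ≤ ((Finset.Icc 1 n).filter A).card :=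
  throughput_monotone_under_insertion_general μ hμ n n' t R c htmono hc s hs hs0 hsle F G A F' G' A'
    hF0 hG hA hF hF'0 hG' hA' hF'
end
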